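/- For ε ∈ {0,1}, m ∈ ℤ with m ≡ ε (mod 2), and ν ∈ ℂ, define c_m(ν) = 2^{1-ν} π e^{imπ/4} / (Γ((ν+3+|m|)/4) Γ((ν+3-|m|)/4)) and ℓ₀(ν) = Γ(ν/2)/(Γ((ν+1+|m|)/4) Γ((ν+1-|m|)/4)), ℓ₁(ν) = Γ(ν/2)/(Γ((ν+3+|m|)/4) Γ((ν+3-|m|)/4)). Then 2⁴ c_m(ν) c_{-m}(-ν) ℓ₀(ν) ℓ₀(-ν) = c_m(ν-2) c_{-m}(-ν-2) ℓ₁(ν) ℓ₁(-ν) = (2⁵ (-1)^{1+ε}/π) · cos²(π(ν+ε)/2) / (ν sin(πν/2)). -/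
import Mathlib


open Complex Real

/-- `c_m(ν) = 2^{1-ν} π e^{imπ/4} / (Γ((ν+3+|m|)/4) Γ((ν+3-|m|)/4))`. -/
noncomputable def cFun (m : ℤ) (ν : ℂ) : ℂ :=
  2 ^ (1 - ν) * (π : ℂ) * Complex.exp (I * m * π / 4) /
    (Complex.Gamma ((ν + 3 + (|m| : ℤ)) / 4) * Complex.Gamma ((ν + 3 - (|m| : ℤ)) / 4))

/-- `ℓ_j(ν) = Γ(ν/2)/(Γ((ν+1+2j+|m|)/4) Γ((ν+1+2j-|m|)/4))`. -/
noncomputable def ellFun (j : ℕ) (m : ℤ) (ν : ℂ) : ℂ :=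
  Complex.Gamma (ν / 2) /
    (Complex.Gamma ((ν + 1 + 2 * j + (|m| : ℤ)) / 4) *
      Complex.Gamma ((ν + 1 + 2 * j - (|m| : ℤ)) / 4))

private lemma cos_add_nat_mul_pi' (x : ℂ) (k : ℕ) :
    Complex.cos (x + (k : ℂ) * (π : ℂ)) = (-1) ^ k * Complex.cos x := by
  induction k with
  | zero => simp
  | succ n ih =>
    rw [show x + ((n + 1 : ℕ) : ℂ) * (π : ℂ) = (x + (n : ℂ) * (π : ℂ)) + π by push_cast; ring,
      Complex.cos_add_pi, ih]
    ring

private lemma sin_pair (x : ℂ) :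
    Complex.sin (x + 3 * (π : ℂ) / 4) * Complex.sin (-x + 3 * (π : ℂ) / 4) =
      Complex.cos (2 * x) / 2 := by
  have hs : Complex.sin (3 * (π : ℂ) / 4) ^ 2 = 1 / 2 := by
    rw [show 3 * (π : ℂ) / 4 = ((3 * π / 4 : ℝ) : ℂ) by push_cast; ring, ← Complex.ofReal_sin,
      show (3 * π / 4 : ℝ) = π - π / 4 by ring, Real.sin_pi_sub, Real.sin_pi_div_four]
    have h2 : (Real.sqrt 2) ^ 2 = 2 := Real.sq_sqrt (by norm_num)
    push_cast
    rw [div_pow]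
    norm_cast
    rw [h2]; norm_num
  have hc : Complex.cos (3 * (π : ℂ) / 4) ^ 2 = 1 / 2 := by
    rw [show 3 * (π : ℂ) / 4 = ((3 * π / 4 : ℝ) : ℂ) by push_cast; ring, ← Complex.ofReal_cos,
      show (3 * π / 4 : ℝ) = π - π / 4 by ring, Real.cos_pi_sub, Real.cos_pi_div_four]
    have h2 : (Real.sqrt 2) ^ 2 = 2 := Real.sq_sqrt (by norm_num)
    push_cast
    rw [neg_pow, div_pow]
    norm_cast
    rw [h2]; norm_num
  have hp := Complex.sin_sq_add_cos_sq x
  rw [Complex.sin_add, Complex.sin_add, Complex.sin_neg, Complex.cos_neg, Complex.cos_two_mul]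
  linear_combination (Complex.cos x ^ 2) * hs - (Complex.sin x ^ 2) * hc - (1 / 2) * hp

private lemma lhs_eval (m : ℤ) (ν : ℂ) (hν0 : ν ≠ 0)
    (hS : Complex.sin ((π : ℂ) * ν / 2) ≠ 0) :
    2 ^ 4 * cFun m ν * cFun (-m) (-ν) * ellFun 0 m ν * ellFun 0 m (-ν)
      = -(2 ^ 5) * (Complex.cos ((π : ℂ) * (ν + ((|m| : ℤ) : ℂ)) / 2) *
          Complex.cos ((π : ℂ) * (ν - ((|m| : ℤ) : ℂ)) / 2)) /
        ((π : ℂ) * (ν * Complex.sin ((π : ℂ) * ν / 2))) := by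
  have hπ : ((π : ℝ) : ℂ) ≠ 0 := Complex.ofReal_ne_zero.2 Real.pi_ne_zero
  set A : ℂ := ((|m| : ℤ) : ℂ) with hA
  have hGG : Complex.Gamma (ν / 2) * Complex.Gamma ((-ν) / 2)
      = -2 * (π : ℂ) / (ν * Complex.sin ((π : ℂ) * ν / 2)) := by
    have h := Complex.Gamma_mul_Gamma_one_sub (ν / 2)
    rw [show (1 : ℂ) - ν / 2 = (-ν) / 2 + 1 by ring,
      Complex.Gamma_add_one _ (by simpa using hν0),
      show (π : ℂ) * (ν / 2) = (π : ℂ) * ν / 2 by ring,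
      eq_div_iff hS] at h
    rw [eq_div_iff (mul_ne_zero hν0 hS)]
    linear_combination (-2 : ℂ) * h
  have R1 : Complex.Gamma ((ν + 3 + A) / 4) * Complex.Gamma ((-ν + 1 - A) / 4)
      = (π : ℂ) / Complex.sin ((π : ℂ) * ((ν + 3 + A) / 4)) := by
    have h := Complex.Gamma_mul_Gamma_one_sub ((ν + 3 + A) / 4)
    rwa [show (1 : ℂ) - (ν + 3 + A) / 4 = (-ν + 1 - A) / 4 by ring] at h
  have R2 : Complex.Gamma ((ν + 3 - A) / 4) * Complex.Gamma ((-ν + 1 + A) / 4)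
      = (π : ℂ) / Complex.sin ((π : ℂ) * ((ν + 3 - A) / 4)) := by
    have h := Complex.Gamma_mul_Gamma_one_sub ((ν + 3 - A) / 4)
    rwa [show (1 : ℂ) - (ν + 3 - A) / 4 = (-ν + 1 + A) / 4 by ring] at h
  have R3 : Complex.Gamma ((-ν + 3 + A) / 4) * Complex.Gamma ((ν + 1 - A) / 4)
      = (π : ℂ) / Complex.sin ((π : ℂ) * ((-ν + 3 + A) / 4)) := by
    have h := Complex.Gamma_mul_Gamma_one_sub ((-ν + 3 + A) / 4)
    rwa [show (1 : ℂ) - (-ν + 3 + A) / 4 = (ν + 1 - A) / 4 by ring] at h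
  have R4 : Complex.Gamma ((-ν + 3 - A) / 4) * Complex.Gamma ((ν + 1 + A) / 4)
      = (π : ℂ) / Complex.sin ((π : ℂ) * ((-ν + 3 - A) / 4)) := by
    have h := Complex.Gamma_mul_Gamma_one_sub ((-ν + 3 - A) / 4)
    rwa [show (1 : ℂ) - (-ν + 3 - A) / 4 = (ν + 1 + A) / 4 by ring] at h
  have hP1 : Complex.sin ((π : ℂ) * ((ν + 3 + A) / 4)) *
      Complex.sin ((π : ℂ) * ((-ν + 3 - A) / 4))
      = Complex.cos ((π : ℂ) * (ν + A) / 2) / 2 := by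
    rw [show (π : ℂ) * ((ν + 3 + A) / 4) = (π : ℂ) * (ν + A) / 4 + 3 * (π : ℂ) / 4 by ring,
      show (π : ℂ) * ((-ν + 3 - A) / 4) = -((π : ℂ) * (ν + A) / 4) + 3 * (π : ℂ) / 4 by ring,
      sin_pair, show 2 * ((π : ℂ) * (ν + A) / 4) = (π : ℂ) * (ν + A) / 2 by ring]
  have hP2 : Complex.sin ((π : ℂ) * ((ν + 3 - A) / 4)) *
      Complex.sin ((π : ℂ) * ((-ν + 3 + A) / 4))
      = Complex.cos ((π : ℂ) * (ν - A) / 2) / 2 := by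
    rw [show (π : ℂ) * ((ν + 3 - A) / 4) = (π : ℂ) * (ν - A) / 4 + 3 * (π : ℂ) / 4 by ring,
      show (π : ℂ) * ((-ν + 3 + A) / 4) = -((π : ℂ) * (ν - A) / 4) + 3 * (π : ℂ) / 4 by ring,
      sin_pair, show 2 * ((π : ℂ) * (ν - A) / 4) = (π : ℂ) * (ν - A) / 2 by ring]
  have hE : Complex.exp (I * ((-m : ℤ) : ℂ) * (π : ℂ) / 4)
      = (Complex.exp (I * (m : ℂ) * (π : ℂ) / 4))⁻¹ := by
    rw [← Complex.exp_neg]; congr 1; push_cast; ring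
  have hu : ((2 : ℂ) ^ ν) ≠ 0 := by
    simp [Complex.cpow_eq_zero_iff]
  have hE0 : Complex.exp (I * (m : ℂ) * (π : ℂ) / 4) ≠ 0 := Complex.exp_ne_zero _
  simp only [cFun, ellFun, abs_neg, Nat.cast_zero, mul_zero, add_zero]
  rw [show (1 : ℂ) - -ν = 1 + ν by ring,
    Complex.cpow_sub _ _ (two_ne_zero), Complex.cpow_add _ _ (two_ne_zero),
    Complex.cpow_one, hE]
  rw [← hA]
  trans (2 ^ 6 * (π : ℂ) ^ 2 *
      (Complex.exp (I * (m : ℂ) * (π : ℂ) / 4) * (Complex.exp (I * (m : ℂ) * (π : ℂ) / 4))⁻¹) *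
      ((2 : ℂ) ^ ν * ((2 : ℂ) ^ ν)⁻¹) *
      (Complex.Gamma (ν / 2) * Complex.Gamma ((-ν) / 2)) /
      ((Complex.Gamma ((ν + 3 + A) / 4) * Complex.Gamma ((-ν + 1 - A) / 4)) *
       (Complex.Gamma ((ν + 3 - A) / 4) * Complex.Gamma ((-ν + 1 + A) / 4)) *
       (Complex.Gamma ((-ν + 3 + A) / 4) * Complex.Gamma ((ν + 1 - A) / 4)) *
       (Complex.Gamma ((-ν + 3 - A) / 4) * Complex.Gamma ((ν + 1 + A) / 4))))
  · ring
  rw [mul_inv_cancel₀ hE0, mul_inv_cancel₀ hu, R1, R2, R3, R4, hGG,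
    div_mul_div_comm, div_mul_div_comm, div_mul_div_comm, div_div_eq_mul_div,
    show Complex.sin ((π : ℂ) * ((ν + 3 + A) / 4)) * Complex.sin ((π : ℂ) * ((ν + 3 - A) / 4)) *
        Complex.sin ((π : ℂ) * ((-ν + 3 + A) / 4)) * Complex.sin ((π : ℂ) * ((-ν + 3 - A) / 4))
      = (Complex.sin ((π : ℂ) * ((ν + 3 + A) / 4)) * Complex.sin ((π : ℂ) * ((-ν + 3 - A) / 4))) *
        (Complex.sin ((π : ℂ) * ((ν + 3 - A) / 4)) * Complex.sin ((π : ℂ) * ((-ν + 3 + A) / 4)))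
      from by ring, hP1, hP2]
  set S := Complex.sin ((π : ℂ) * ν / 2) with hSdef
  set c1 := Complex.cos ((π : ℂ) * (ν + A) / 2) with hc1
  set c2 := Complex.cos ((π : ℂ) * (ν - A) / 2) with hc2
  rw [div_eq_div_iff (by simp [hπ]) (by simp [hπ, hν0, hS])]
  linear_combination (-32 * (π : ℂ) ^ 4 * c1 * c2) * mul_inv_cancel₀ (mul_ne_zero hν0 hS)

theorem cFun_ellFun_identity (ε : ℕ) (hε : ε ≤ 1) (m : ℤ) (hm : (m : ℤ) % 2 = (ε : ℤ))
    (ν : ℂ) (hν : ∀ n : ℕ, ν ≠ 2 * n ∧ ν ≠ -(2 * n)) :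
    2 ^ 4 * cFun m ν * cFun (-m) (-ν) * ellFun 0 m ν * ellFun 0 m (-ν)
        = cFun m (ν - 2) * cFun (-m) (-ν - 2) * ellFun 1 m ν * ellFun 1 m (-ν) ∧
    2 ^ 4 * cFun m ν * cFun (-m) (-ν) * ellFun 0 m ν * ellFun 0 m (-ν)
        = 2 ^ 5 * (-1 : ℂ) ^ (1 + ε) / π *
            (Complex.cos (π * (ν + ε) / 2)) ^ 2 / (ν * Complex.sin (π * ν / 2)) := by
  have hπ : ((π : ℝ) : ℂ) ≠ 0 := Complex.ofReal_ne_zero.2 Real.pi_ne_zero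
  have hν0 : ν ≠ 0 := by simpa using (hν 0).1
  have hS : Complex.sin ((π : ℂ) * ν / 2) ≠ 0 := by
    intro h
    rw [Complex.sin_eq_zero_iff] at h
    obtain ⟨k, hk⟩ := h
    have hk2 : ν = 2 * (k : ℂ) := by
      have h2 : (π : ℂ) * ν = (π : ℂ) * (2 * (k : ℂ)) := by linear_combination 2 * hk
      exact mul_left_cancel₀ hπ h2
    rcases le_or_gt 0 k with h' | h'
    · lift k to ℕ using h'
      exact (hν k).1 (by rw [hk2]; push_cast; ring)
    · have h3 : (((-k).toNat : ℤ)) = -k := Int.toNat_of_nonneg (by omega)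
      have h4 : (((-k).toNat : ℕ) : ℂ) = ((-k : ℤ) : ℂ) := by exact_mod_cast congrArg (Int.cast : ℤ → ℂ) h3
      exact (hν (-k).toNat).2 (by rw [hk2, h4]; push_cast; ring)
  have h8 : (2 : ℂ) ^ (3 : ℂ) = 8 := by
    rw [show (3 : ℂ) = ((3 : ℕ) : ℂ) by norm_num, Complex.cpow_natCast]; norm_num
  constructor
  · -- first identity: pure rearrangement of Gamma factors
    simp only [cFun, ellFun, abs_neg, Nat.cast_zero, Nat.cast_one, mul_zero, mul_one, add_zero]
    rw [show (1 : ℂ) - (ν - 2) = 3 - ν by ring, show (1 : ℂ) - (-ν - 2) = 3 + ν by ring,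
      show (1 : ℂ) - -ν = 1 + ν by ring,
      Complex.cpow_sub _ _ (two_ne_zero : (2 : ℂ) ≠ 0),
      Complex.cpow_sub _ _ (two_ne_zero : (2 : ℂ) ≠ 0),
      Complex.cpow_add _ _ (two_ne_zero : (2 : ℂ) ≠ 0),
      Complex.cpow_add _ _ (two_ne_zero : (2 : ℂ) ≠ 0),
      Complex.cpow_one, h8,
      show (ν - 2 + 3 + ((|m| : ℤ) : ℂ)) / 4 = (ν + 1 + ((|m| : ℤ) : ℂ)) / 4 by ring,
      show (ν - 2 + 3 - ((|m| : ℤ) : ℂ)) / 4 = (ν + 1 - ((|m| : ℤ) : ℂ)) / 4 by ring,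
      show (-ν - 2 + 3 + ((|m| : ℤ) : ℂ)) / 4 = (-ν + 1 + ((|m| : ℤ) : ℂ)) / 4 by ring,
      show (-ν - 2 + 3 - ((|m| : ℤ) : ℂ)) / 4 = (-ν + 1 - ((|m| : ℤ) : ℂ)) / 4 by ring,
      show (ν + 1 + 2 + ((|m| : ℤ) : ℂ)) / 4 = (ν + 3 + ((|m| : ℤ) : ℂ)) / 4 by ring,
      show (ν + 1 + 2 - ((|m| : ℤ) : ℂ)) / 4 = (ν + 3 - ((|m| : ℤ) : ℂ)) / 4 by ring,
      show (-ν + 1 + 2 + ((|m| : ℤ) : ℂ)) / 4 = (-ν + 3 + ((|m| : ℤ) : ℂ)) / 4 by ring,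
      show (-ν + 1 + 2 - ((|m| : ℤ) : ℂ)) / 4 = (-ν + 3 - ((|m| : ℤ) : ℂ)) / 4 by ring]
    ring
  · rw [lhs_eval m ν hν0 hS]
    have hpar : Complex.cos ((π : ℂ) * (ν + ((|m| : ℤ) : ℂ)) / 2) *
        Complex.cos ((π : ℂ) * (ν - ((|m| : ℤ) : ℂ)) / 2)
        = (-1) ^ ε * Complex.cos ((π : ℂ) * (ν + (ε : ℂ)) / 2) ^ 2 := by
      have h1 : |m| % 2 = (ε : ℤ) := by rcases abs_choice m with h | h <;> omega
      have h0 : 0 ≤ |m| := abs_nonneg m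
      obtain ⟨k, hk⟩ : ∃ k : ℕ, |m| = (ε : ℤ) + 2 * k :=
        ⟨((|m| - ε) / 2).toNat, by omega⟩
      have hAc : ((|m| : ℤ) : ℂ) = (ε : ℂ) + 2 * (k : ℂ) := by rw [hk]; push_cast; ring
      rw [hAc,
        show (π : ℂ) * (ν + ((ε : ℂ) + 2 * (k : ℂ))) / 2
          = (π : ℂ) * (ν + (ε : ℂ)) / 2 + (k : ℂ) * (π : ℂ) by ring,
        cos_add_nat_mul_pi',
        ← Complex.cos_neg ((π : ℂ) * (ν - ((ε : ℂ) + 2 * (k : ℂ))) / 2),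
        show -((π : ℂ) * (ν - ((ε : ℂ) + 2 * (k : ℂ))) / 2)
          = (π : ℂ) * ((ε : ℂ) - ν) / 2 + (k : ℂ) * (π : ℂ) by ring,
        cos_add_nat_mul_pi']
      have hkk : ((-1 : ℂ)) ^ k * (-1) ^ k = 1 := by
        rw [← pow_add]; exact Even.neg_one_pow ⟨k, rfl⟩
      interval_cases ε
      · push_cast
        rw [show (π : ℂ) * (0 - ν) / 2 = -((π : ℂ) * (ν + 0) / 2) by ring, Complex.cos_neg]
        linear_combination (Complex.cos ((π : ℂ) * (ν + 0) / 2)) ^ 2 * hkk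
      · push_cast
        rw [show (π : ℂ) * (1 - ν) / 2 = (π : ℂ) - (π : ℂ) * (ν + 1) / 2 by ring,
          Complex.cos_pi_sub]
        linear_combination (-(Complex.cos ((π : ℂ) * (ν + 1) / 2)) ^ 2) * hkk
    rw [hpar]
    ring
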